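/- arXiv:2508.19760 — 2 statements merged into one kernel-verified Lean document; each statement's English description precedes it below -/
import Mathlib

section
/- Let H be a finite index set, and for each h ∈ H let C_h and T_h be natural numbers with T_h ≥ 1; let B be a natural number. Assume the total utilization satisfies Σ_{h ∈ H} C_h / T_h < 1 (as rational numbers). Define f : ℕ → ℕ by f(t) = B + Σ_{h ∈ H} ⌈t / T_h⌉ · C_h, where ⌈t / T_h⌉ denotes ceiling division of natural numbers. Then f has a least fixed point, i.e., there exists L ∈ ℕ with f(L) = L and L ≤ L' for every L' ∈ ℕ with f(L') = L'. -/
/-- The active-period recurrence `f t = B + Σ_h ⌈t / T_h⌉ · C_h` (ceiling division on ℕ)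
has a least fixed point whenever the total utilization `Σ_h C_h / T_h` is below 1. -/
theorem active_period_least_fixed_point {ι : Type*} (H : Finset ι) (C T : ι → ℕ)
    (hT : ∀ h ∈ H, 1 ≤ T h) (B : ℕ)
    (hU : ∑ h ∈ H, (C h : ℚ) / (T h : ℚ) < 1) :
    ∃ L : ℕ, (B + ∑ h ∈ H, (L ⌈/⌉ T h) * C h = L) ∧
      ∀ L' : ℕ, (B + ∑ h ∈ H, (L' ⌈/⌉ T h) * C h = L') → L ≤ L' := by
  set f : ℕ → ℕ := fun t => B + ∑ h ∈ H, (t ⌈/⌉ T h) * C h with hfdef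
  have hmono : Monotone f := by
    intro a b hab
    refine Nat.add_le_add_left (Finset.sum_le_sum fun h hh => ?_) B
    refine Nat.mul_le_mul_right _ ?_
    rw [Nat.ceilDiv_eq_add_pred_div, Nat.ceilDiv_eq_add_pred_div]
    exact Nat.div_le_div_right (by omega)
  set U : ℚ := ∑ h ∈ H, (C h : ℚ) / (T h : ℚ) with hUdef
  have hU0 : 0 ≤ U := Finset.sum_nonneg fun h _ => by positivity
  have h1U : 0 < 1 - U := by linarith
  set S : ℚ := ∑ h ∈ H, (C h : ℚ) with hSdef
  have hS0 : 0 ≤ S := Finset.sum_nonneg fun h _ => by positivity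
  -- key bound: (f t : ℚ) ≤ B + S + t * U
  have hbound : ∀ t : ℕ, (f t : ℚ) ≤ (B : ℚ) + S + t * U := by
    intro t
    have hsum : ((∑ h ∈ H, (t ⌈/⌉ T h) * C h : ℕ) : ℚ) ≤ S + t * U := by
      push_cast
      rw [hSdef, hUdef, Finset.mul_sum, ← Finset.sum_add_distrib]
      refine Finset.sum_le_sum fun h hh => ?_
      have hTh : (1 : ℚ) ≤ (T h : ℚ) := by exact_mod_cast hT h hh
      have hTh0 : (0 : ℚ) < (T h : ℚ) := by linarith
      have hcd : ((t ⌈/⌉ T h : ℕ) : ℚ) ≤ (t : ℚ) / (T h : ℚ) + 1 := by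
        rw [Nat.ceilDiv_eq_add_pred_div]
        refine (Nat.cast_div_le).trans ?_
        have hc : ((t + T h - 1 : ℕ) : ℚ) ≤ (t : ℚ) + (T h : ℚ) - 1 := by
          have := hT h hh
          rw [Nat.cast_sub (by omega : 1 ≤ t + T h)]
          push_cast; ring_nf; norm_num
        rw [div_le_iff₀ hTh0]
        have heq2 : ((t : ℚ) / (T h : ℚ) + 1) * (T h : ℚ) = (t : ℚ) + (T h : ℚ) := by
          field_simp
        rw [heq2]
        linarith
      have hC0 : (0:ℚ) ≤ (C h : ℚ) := by positivity
      have := mul_le_mul_of_nonneg_right hcd hC0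
      calc ((t ⌈/⌉ T h : ℕ) : ℚ) * (C h : ℚ) ≤ ((t : ℚ) / (T h : ℚ) + 1) * (C h : ℚ) := this
        _ = (C h : ℚ) + (t : ℚ) * ((C h : ℚ) / (T h : ℚ)) := by field_simp; ring
    have heq : (f t : ℚ) = (B : ℚ) + ((∑ h ∈ H, (t ⌈/⌉ T h) * C h : ℕ) : ℚ) := by
      simp [hfdef]
    rw [heq]; linarith
  -- find M with f M ≤ M
  obtain ⟨M, hM⟩ : ∃ M : ℕ, f M ≤ M := by
    refine ⟨⌈((B : ℚ) + S) / (1 - U)⌉₊, ?_⟩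
    set M : ℕ := ⌈((B : ℚ) + S) / (1 - U)⌉₊ with hMdef
    have hMge : ((B : ℚ) + S) / (1 - U) ≤ (M : ℚ) := Nat.le_ceil _
    have h1 : (B : ℚ) + S ≤ (M : ℚ) * (1 - U) := by
      rw [div_le_iff₀ h1U] at hMge; linarith
    have h2 : (f M : ℚ) ≤ (M : ℚ) := by
      have := hbound M; nlinarith
    exact_mod_cast h2
  -- iterate f from 0
  set g : ℕ → ℕ := fun n => f^[n] 0 with hgdef
  have hgsucc : ∀ n, g (n + 1) = f (g n) := by
    intro n; simp [hgdef, Function.iterate_succ_apply']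
  have hgle : ∀ n, g n ≤ g (n + 1) := by
    intro n
    induction n with
    | zero => simp [hgdef]
    | succ k ih => rw [hgsucc, hgsucc]; exact hmono ih
  have hgM : ∀ n, g n ≤ M := by
    intro n
    induction n with
    | zero => simp [hgdef]
    | succ k ih => rw [hgsucc]; exact (hmono ih).trans hM
  have hfix : ∃ n, g (n + 1) = g n := by
    by_contra hcon
    push_neg at hcon
    have hstrict : StrictMono g := strictMono_nat_of_lt_succ fun n =>
      lt_of_le_of_ne (hgle n) (Ne.symm (hcon n))
    have h1 := hstrict.le_apply (x := M + 1)
    have h2 := hgM (M + 1)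
    omega
  obtain ⟨n, hn⟩ := hfix
  refine ⟨g n, ?_, ?_⟩
  · have := hgsucc n
    rw [hn] at this
    exact this.symm
  · intro L' hL'
    have hL'fix : f L' = L' := hL'
    have : ∀ m, g m ≤ L' := by
      intro m
      induction m with
      | zero => simp [hgdef]
      | succ k ih => rw [hgsucc]; calc f (g k) ≤ f L' := hmono ih
                                      _ = L' := hL'fix
    exact this n
end

section
/- Let H be a finite index set, and for each h ∈ H let C_h and T_h be natural numbers with T_h ≥ 1; let B be a natural number. Assume Σ_{h ∈ H} C_h / T_h < 1 (as rational numbers). Define g : ℕ → ℕ by g(s) = B + Σ_{h ∈ H} (⌊s / T_h⌋ + 1) · C_h, where ⌊s / T_h⌋ denotes floor division of natural numbers. Then g has a least fixed point, i.e., there exists s* ∈ ℕ with g(s*) = s* and s* ≤ s' for every s' ∈ ℕ with g(s') = s'. -/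
/-!
The right-hand side `g` of the recurrence is monotone, and since `⌊s / T⌋ ≤ s / T` it satisfies
`g s ≤ K + U s` with `K = B + Σ_h C_h` and slope `U = Σ_h C_h / T_h < 1`. Hence `g N ≤ N` for
every `N ≥ K / (1 - U)`. For a monotone map on a well-ordered chain, the least pre-fixed point
`m` is a fixed point (`g (g m) ≤ g m` forces `m ≤ g m`), and it lies below every fixed point.
-/

open Finset Function

theorem Monotone.exists_isLeast_fixedPoints {α : Type*} [LinearOrder α] [WellFoundedLT α]
    {f : α → α} (hf : Monotone f) (hpre : ∃ a, f a ≤ a) :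
    ∃ m, IsLeast (fixedPoints f) m := by
  obtain ⟨m, hm, hmin⟩ := wellFounded_lt.has_min {a | f a ≤ a} hpre
  have hm_le : m ≤ f m := not_lt.mp (hmin (f m) (hf hm))
  exact ⟨m, le_antisymm hm hm_le, fun s hs => not_lt.mp (hmin s hs.le)⟩

theorem exists_le_of_le_affine {R : Type*} [Field R] [LinearOrder R] [IsStrictOrderedRing R]
    [Archimedean R] {f : ℕ → ℕ} {K U : R} (hU : U < 1) (hf : ∀ n, (f n : R) ≤ K + U * n) :
    ∃ n, f n ≤ n := by
  obtain ⟨n, hn⟩ := exists_nat_ge (K / (1 - U))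
  have hK : K ≤ (1 - U) * n := by rwa [div_le_iff₀' (sub_pos.mpr hU)] at hn
  refine ⟨n, Nat.cast_le.mp ((hf n).trans ?_)⟩
  linarith

def startTimeRecurrence {ι : Type*} (H : Finset ι) (C T : ι → ℕ) (B : ℕ) (s : ℕ) : ℕ :=
  B + ∑ h ∈ H, (s / T h + 1) * C h

namespace startTimeRecurrence

variable {ι : Type*} (H : Finset ι) (C T : ι → ℕ) (B : ℕ)

theorem monotone : Monotone (startTimeRecurrence H C T B) := fun _ _ hab =>
  Nat.add_le_add_left (sum_le_sum fun _ _ =>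
    Nat.mul_le_mul_right _ (Nat.add_le_add_right (Nat.div_le_div_right hab) 1)) B

theorem cast_le_affine (s : ℕ) :
    (startTimeRecurrence H C T B s : ℚ) ≤
      (B + ∑ h ∈ H, C h : ℕ) + (∑ h ∈ H, (C h : ℚ) / T h) * s := by
  have hterm : ∀ h ∈ H, (((s / T h + 1) * C h : ℕ) : ℚ) ≤ C h + (C h : ℚ) / T h * s := by
    intro h _
    calc (((s / T h + 1) * C h : ℕ) : ℚ) = (((s / T h : ℕ) : ℚ) + 1) * C h := by push_cast; ring
      _ ≤ ((s : ℚ) / T h + 1) * C h := by gcongr; exact Nat.cast_div_le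
      _ = C h + (C h : ℚ) / T h * s := by ring
  calc (startTimeRecurrence H C T B s : ℚ)
      = B + ∑ h ∈ H, (((s / T h + 1) * C h : ℕ) : ℚ) := by
        simp only [startTimeRecurrence, Nat.cast_add, Nat.cast_sum]
    _ ≤ B + ∑ h ∈ H, ((C h : ℚ) + (C h : ℚ) / T h * s) := by gcongr with h hh; exact hterm h hh
    _ = (B + ∑ h ∈ H, C h : ℕ) + (∑ h ∈ H, (C h : ℚ) / T h) * s := by
        push_cast; rw [sum_add_distrib, sum_mul]; ring

end startTimeRecurrence

theorem start_time_least_fixed_point_general {ι : Type*} (H : Finset ι) (C T : ι → ℕ)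
    (B : ℕ)
    (hU : ∑ h ∈ H, (C h : ℚ) / (T h : ℚ) < 1) :
    ∃ s : ℕ, (B + ∑ h ∈ H, (s / T h + 1) * C h = s) ∧
      ∀ s' : ℕ, (B + ∑ h ∈ H, (s' / T h + 1) * C h = s') → s ≤ s' := by
  obtain ⟨s, hfix, hleast⟩ := (startTimeRecurrence.monotone H C T B).exists_isLeast_fixedPoints
    (exists_le_of_le_affine hU (startTimeRecurrence.cast_le_affine H C T B))
  exact ⟨s, hfix, fun s' hs' => hleast hs'⟩

/-- The read-phase start-time recurrence `g s = B + Σ_h (⌊s / T_h⌋ + 1) · C_h`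
(floor division on ℕ) has a least fixed point whenever the total utilization
`Σ_h C_h / T_h` is below 1. -/
theorem start_time_least_fixed_point {ι : Type*} (H : Finset ι) (C T : ι → ℕ)
    (hT : ∀ h ∈ H, 1 ≤ T h) (B : ℕ)
    (hU : ∑ h ∈ H, (C h : ℚ) / (T h : ℚ) < 1) :
    ∃ s : ℕ, (B + ∑ h ∈ H, (s / T h + 1) * C h = s) ∧
      ∀ s' : ℕ, (B + ∑ h ∈ H, (s' / T h + 1) * C h = s') → s ≤ s' :=
  start_time_least_fixed_point_general H C T B hU
end
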